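/- arXiv:2004.00744 — 3 statements merged into one kernel-verified Lean document; each statement's English description precedes it below -/
import Mathlib

section
/- Let G be a regular pattern graph on a pattern set 𝓡 and let p and p' be two joint pmfs, both satisfying marginal positivity, whose pattern mixture models both factorize with respect to G. If p and p' induce the same observed-data distribution, i.e. p_r(ℓ, r) = p'_r(ℓ, r) for every ℓ and every r ∈ 𝓡, then p = p' (the full-data distribution is nonparametrically identified by the pattern-graph restriction). -/
open Finset

noncomputable section

/-- Response patterns: binary vectors of length `d`, ordered pointwise (`false < true`). -/
abbrev Pat (d : ℕ) := Fin d → Bool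

/-- The all-true (fully observed) pattern `1_d`. -/
def allOnes (d : ℕ) : Pat d := fun _ => true

variable {d : ℕ}


instance (r s : Pat d) : Decidable (r ≤ s) :=
  decidable_of_iff (∀ j, r j ≤ s j) (by simp [Pi.le_def])

instance (r s : Pat d) : Decidable (r < s) :=
  decidable_of_iff (r ≤ s ∧ ¬ s ≤ r) lt_iff_le_not_ge.symm

/-- Two full-data values have the same observed part under pattern `r`. -/
def agree {X : Fin d → Type*} (r : Pat d) (ℓ ℓ' : ∀ j, X j) : Prop :=
  ∀ j, r j = true → ℓ j = ℓ' j

instance {X : Fin d → Type*} [∀ j, DecidableEq (X j)] (r : Pat d) (ℓ ℓ' : ∀ j, X j) :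
    Decidable (agree r ℓ ℓ') := by
  unfold agree; infer_instance

variable {X : Fin d → Type*} [∀ j, Fintype (X j)] [∀ j, DecidableEq (X j)]

/-- `p(ℓ, A) = Σ_{s ∈ A} p(ℓ, s)`. -/
def jointA (p : (∀ j, X j) → Pat d → ℝ) (ℓ : ∀ j, X j) (A : Finset (Pat d)) : ℝ :=
  ∑ s ∈ A, p ℓ s

/-- `p_r(ℓ, s) = Σ_{ℓ' ~_r ℓ} p(ℓ', s)` : observed-data mass under pattern `r`. -/
def obsP (p : (∀ j, X j) → Pat d → ℝ) (r : Pat d) (ℓ : ∀ j, X j) (s : Pat d) : ℝ :=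
  ∑ ℓ' ∈ univ.filter (fun ℓ' => agree r ℓ ℓ'), p ℓ' s

/-- `p_r(ℓ, A) = Σ_{s ∈ A} p_r(ℓ, s)`. -/
def obsPA (p : (∀ j, X j) → Pat d → ℝ) (r : Pat d) (ℓ : ∀ j, X j) (A : Finset (Pat d)) : ℝ :=
  ∑ s ∈ A, obsP p r ℓ s

/-- `p` is a joint pmf on (full data) × (pattern set `𝓡`): nonnegative with total sum 1. -/
def IsJointPMF (𝓡 : Finset (Pat d)) (p : (∀ j, X j) → Pat d → ℝ) : Prop :=
  (∀ ℓ, ∀ r ∈ 𝓡, 0 ≤ p ℓ r) ∧ (∑ ℓ : ∀ j, X j, ∑ r ∈ 𝓡, p ℓ r) = 1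

/-- Marginal positivity: `p_r(ℓ, r) > 0` for every `ℓ` and every `r ∈ 𝓡`. -/
def MargPos (𝓡 : Finset (Pat d)) (p : (∀ j, X j) → Pat d → ℝ) : Prop :=
  ∀ ℓ, ∀ r ∈ 𝓡, 0 < obsP p r ℓ r

/-- Full positivity: `p(ℓ, r) > 0` for every `ℓ` and every `r ∈ 𝓡`. -/
def FullPos (𝓡 : Finset (Pat d)) (p : (∀ j, X j) → Pat d → ℝ) : Prop :=
  ∀ ℓ, ∀ r ∈ 𝓡, 0 < p ℓ r

/-- Selection odds `O_r(ℓ) = p_r(ℓ, r) / p_r(ℓ, PA(r))`. -/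
def odds (p : (∀ j, X j) → Pat d → ℝ) (PA : Pat d → Finset (Pat d)) (r : Pat d)
    (ℓ : ∀ j, X j) : ℝ :=
  obsP p r ℓ r / obsPA p r ℓ (PA r)

/-- A regular pattern graph on `𝓡`: `1_d` is a source, and every other pattern in `𝓡`
has a nonempty parent set inside `𝓡` consisting of strictly larger patterns. -/
def IsRegularGraph (𝓡 : Finset (Pat d)) (PA : Pat d → Finset (Pat d)) : Prop :=
  PA (allOnes d) = ∅ ∧
    ∀ r ∈ 𝓡, r ≠ allOnes d → (PA r).Nonempty ∧ PA r ⊆ 𝓡 ∧ ∀ s ∈ PA r, r < s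

/-- The selection odds model of `p` factorizes with respect to the pattern graph. -/
def SelOddsFactorizes (𝓡 : Finset (Pat d)) (PA : Pat d → Finset (Pat d))
    (p : (∀ j, X j) → Pat d → ℝ) : Prop :=
  ∀ r ∈ 𝓡, r ≠ allOnes d → ∀ ℓ, p ℓ r = jointA p ℓ (PA r) * odds p PA r ℓ

/-- The pattern mixture model of `p` factorizes with respect to the pattern graph. -/
def PMMFactorizes (𝓡 : Finset (Pat d)) (PA : Pat d → Finset (Pat d))
    (p : (∀ j, X j) → Pat d → ℝ) : Prop :=
  ∀ r ∈ 𝓡, r ≠ allOnes d → ∀ ℓ,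
    p ℓ r * obsPA p r ℓ (PA r) = jointA p ℓ (PA r) * obsP p r ℓ r

/-- A path from `u` to `v` in the pattern graph: a nonempty sequence
`u = r_0, r_1, …, r_m = v` of patterns in `𝓡` with `r_i ∈ PA(r_{i+1})`. -/
def IsPath (𝓡 : Finset (Pat d)) (PA : Pat d → Finset (Pat d)) (u v : Pat d)
    (Ξ : List (Pat d)) : Prop :=
  Ξ ≠ [] ∧ Ξ.head? = some u ∧ Ξ.getLast? = some v ∧ (∀ q ∈ Ξ, q ∈ 𝓡) ∧
    Ξ.Chain' (fun a b => a ∈ PA b)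

/-! The fully observed pattern is identified directly by the observed-data law. For any other
pattern `r`, the factorization writes `p(ℓ, r)` as `p(ℓ, PA(r)) · p_r(ℓ, r) / p_r(ℓ, PA(r))`;
the observed factor is shared by `p` and `p'`, and the other two only involve the strictly
larger parent patterns, so downward induction on the finite pattern order proves `p = p'`.
Marginal positivity of the parents, transported down to `r`, keeps the denominator nonzero. -/

omit [∀ j, Fintype (X j)] [∀ j, DecidableEq (X j)] in
theorem agree.of_le {r s : Pat d} (hrs : r ≤ s) {ℓ ℓ' : ∀ j, X j} (h : agree s ℓ ℓ') :
    agree r ℓ ℓ' :=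
  fun j hj => h j (Bool.le_iff_imp.mp (hrs j) hj)

omit [∀ j, Fintype (X j)] [∀ j, DecidableEq (X j)] in
theorem agree_allOnes_iff {ℓ ℓ' : ∀ j, X j} : agree (allOnes d) ℓ ℓ' ↔ ℓ = ℓ' :=
  ⟨fun h => funext fun j => h j rfl, fun h _ _ => h ▸ rfl⟩

theorem obsP_allOnes (p : (∀ j, X j) → Pat d → ℝ) (ℓ : ∀ j, X j) (s : Pat d) :
    obsP p (allOnes d) ℓ s = p ℓ s := by
  simp only [obsP, agree_allOnes_iff, filter_eq, mem_univ, if_true, sum_singleton]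

theorem obsP_anti {p : (∀ j, X j) → Pat d → ℝ} {t : Pat d} (hp : ∀ ℓ, 0 ≤ p ℓ t)
    {r s : Pat d} (hrs : r ≤ s) (ℓ : ∀ j, X j) : obsP p s ℓ t ≤ obsP p r ℓ t :=
  sum_le_sum_of_subset_of_nonneg
    (monotone_filter_right _ fun _ _ => agree.of_le hrs) fun ℓ' _ _ => hp ℓ'

theorem obsPA_pos {𝓡 : Finset (Pat d)} {p : (∀ j, X j) → Pat d → ℝ}
    (hpmf : IsJointPMF 𝓡 p) (hpos : MargPos 𝓡 p) {r : Pat d} {A : Finset (Pat d)}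
    (hA : A.Nonempty) (hA𝓡 : A ⊆ 𝓡) (hrA : ∀ s ∈ A, r ≤ s) (ℓ : ∀ j, X j) :
    0 < obsPA p r ℓ A :=
  sum_pos (fun s hs => (hpos ℓ s (hA𝓡 hs)).trans_le
    (obsP_anti (fun ℓ' => hpmf.1 ℓ' s (hA𝓡 hs)) (hrA s hs) ℓ)) hA

omit [∀ j, Fintype (X j)] [∀ j, DecidableEq (X j)] in
theorem jointA_congr {p p' : (∀ j, X j) → Pat d → ℝ} {A : Finset (Pat d)}
    (h : ∀ s ∈ A, ∀ ℓ, p ℓ s = p' ℓ s) (ℓ : ∀ j, X j) : jointA p ℓ A = jointA p' ℓ A :=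
  sum_congr rfl fun s hs => h s hs ℓ

theorem obsPA_congr {p p' : (∀ j, X j) → Pat d → ℝ} {A : Finset (Pat d)}
    (h : ∀ s ∈ A, ∀ ℓ, p ℓ s = p' ℓ s) (r : Pat d) (ℓ : ∀ j, X j) :
    obsPA p r ℓ A = obsPA p' r ℓ A :=
  sum_congr rfl fun s hs => sum_congr rfl fun ℓ' _ => h s hs ℓ'

theorem PMMFactorizes.eq_of_eq_on_parents {𝓡 : Finset (Pat d)} {PA : Pat d → Finset (Pat d)}
    {p p' : (∀ j, X j) → Pat d → ℝ} (hfact : PMMFactorizes 𝓡 PA p)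
    (hfact' : PMMFactorizes 𝓡 PA p') {r : Pat d} (hr : r ∈ 𝓡) (hr1 : r ≠ allOnes d)
    (ℓ : ∀ j, X j) (hden : obsPA p r ℓ (PA r) ≠ 0)
    (hobs : obsP p r ℓ r = obsP p' r ℓ r) (hPA : ∀ s ∈ PA r, ∀ ℓ, p ℓ s = p' ℓ s) :
    p ℓ r = p' ℓ r := by
  have e' := hfact' r hr hr1 ℓ
  rw [← obsPA_congr hPA, ← jointA_congr hPA, ← hobs, ← hfact r hr hr1 ℓ] at e'
  exact (mul_right_cancel₀ hden e').symm

theorem pattern_mixture_identification_general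
    (𝓡 : Finset (Pat d))
    (PA : Pat d → Finset (Pat d)) (hG : IsRegularGraph 𝓡 PA)
    (p p' : (∀ j, X j) → Pat d → ℝ)
    (hpmf : IsJointPMF 𝓡 p)
    (hpos : MargPos 𝓡 p)
    (hfact : PMMFactorizes 𝓡 PA p) (hfact' : PMMFactorizes 𝓡 PA p')
    (hobs : ∀ r ∈ 𝓡, ∀ ℓ, obsP p r ℓ r = obsP p' r ℓ r) :
    ∀ ℓ, ∀ r ∈ 𝓡, p ℓ r = p' ℓ r := by
  suffices h : ∀ r ∈ 𝓡, ∀ ℓ, p ℓ r = p' ℓ r from fun ℓ r hr => h r hr ℓ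
  intro r
  induction r using WellFoundedGT.induction with
  | ind r ih =>
    intro hr ℓ
    by_cases hr1 : r = allOnes d
    · subst hr1
      simpa only [obsP_allOnes] using hobs _ hr ℓ
    obtain ⟨hne, hsub, hlt⟩ := hG.2 r hr hr1
    exact hfact.eq_of_eq_on_parents hfact' hr hr1 ℓ
      (obsPA_pos hpmf hpos hne hsub (fun s hs => (hlt s hs).le) ℓ).ne' (hobs r hr ℓ)
      fun s hs => ih s (hlt s hs) (hsub hs)

/-- **Theorem 2 (nonparametric identification).** Two joint pmfs with the same
observed-data distribution whose pattern mixture models both factorize w.r.t. the same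
regular pattern graph are equal: the full-data distribution is identified. -/
theorem pattern_mixture_identification [∀ j, Nonempty (X j)]
    (𝓡 : Finset (Pat d)) (h𝓡 : allOnes d ∈ 𝓡)
    (PA : Pat d → Finset (Pat d)) (hG : IsRegularGraph 𝓡 PA)
    (p p' : (∀ j, X j) → Pat d → ℝ)
    (hpmf : IsJointPMF 𝓡 p) (hpmf' : IsJointPMF 𝓡 p')
    (hpos : MargPos 𝓡 p) (hpos' : MargPos 𝓡 p')
    (hfact : PMMFactorizes 𝓡 PA p) (hfact' : PMMFactorizes 𝓡 PA p')
    (hobs : ∀ r ∈ 𝓡, ∀ ℓ, obsP p r ℓ r = obsP p' r ℓ r) :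
    ∀ ℓ, ∀ r ∈ 𝓡, p ℓ r = p' ℓ r :=
  pattern_mixture_identification_general 𝓡 PA hG p p' hpmf hpos hfact hfact' hobs
end
end

section
/- Let G be a regular pattern graph on a pattern set 𝓡 and let p be a joint pmf satisfying marginal positivity whose selection odds model factorizes with respect to G. Fix θ : ((j : Fin d) → X_j) → ℝ, a pattern r ∈ 𝓡 with r ≠ 1_d, and a path Ξ ∈ Π_r. Suppose given working models O†_s and μ†_s for each s ∈ Ξ with s ≠ 1_d, each a real-valued function of ℓ depending only on the coordinates observed under s, such that for every such s at least one of the following holds: O†_s = O_s (the true selection odds) or μ†_s = μ_{Ξ,s} (the true regression function). Then the multiply-robust functional is unbiased along the path: Σ_{ℓ, ρ} 𝓛†_Ξ(ℓ, ρ) · p(ℓ, ρ) = θ_Ξ. -/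
open Finset

noncomputable section

variable {d : ℕ}


variable {X : Fin d → Type*} [∀ j, Fintype (X j)] [∀ j, DecidableEq (X j)]

/-!
The augmentation term of a pattern `s` on the path has mean
`Σ_ℓ μ†_s(ℓ) p(ℓ, PA(s)) (O_s(ℓ) - O†_s(ℓ)) ∏_{w < s} O†_w(ℓ)`, by the factorization
`p(ℓ, s) = p(ℓ, PA(s)) O_s(ℓ)`. If `O†_s = O_s` this vanishes. If `μ†_s = μ_{Ξ,s}`, the factor
after `μ†_s` depends only on the part of `ℓ` observed under `s`, so averaging over `ℓ' ~_s ℓ`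
turns the mean into `Σ_ℓ θ(ℓ) p(ℓ, 1_d) ∏_{τ > s} O_τ(ℓ) (O_s(ℓ) - O†_s(ℓ)) ∏_{w < s} O†_w(ℓ)`,
which is also its value in the first case. Along the strictly decreasing path these terms
telescope to `θ p(·, 1_d) (∏ O_s - ∏ O†_s)`, exactly the bias of the inverse-weighting term.
-/

lemma sum_list_sum_comm {ι κ M : Type*} [AddCommMonoid M] (s : Finset κ) (l : List ι)
    (f : ι → κ → M) :
    ∑ x ∈ s, (l.map fun i => f i x).sum = (l.map fun i => ∑ x ∈ s, f i x).sum := by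
  induction l with
  | nil => simp
  | cons i l ih => simp [sum_add_distrib, ih]

lemma sum_ite_eq_sub_mul_ite_mem {α R : Type*} [DecidableEq α] [CommRing R] {S A : Finset α}
    {s : α} (hs : s ∈ S) (hA : A ⊆ S) (c : R) (q : α → R) :
    ∑ ρ ∈ S, ((if ρ = s then 1 else 0) - c * (if ρ ∈ A then 1 else 0)) * q ρ
      = q s - c * ∑ ρ ∈ A, q ρ := by
  simp only [sub_mul, sum_sub_distrib, ite_mul, one_mul, zero_mul, mul_assoc, ← mul_sum,
    sum_ite_eq', if_pos hs, sum_ite_mem, inter_eq_right.mpr hA]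

lemma prod_sub_prod_eq_sum_of_pairwise_gt {α R : Type*} [Preorder α] [DecidableLT α] [CommRing R]
    (a b : α → R) {L : List α} (hL : L.Pairwise (· > ·)) :
    (L.map a).prod - (L.map b).prod
      = (L.map fun s => (L.map fun τ => if s < τ then a τ else 1).prod * (a s - b s)
          * (L.map fun w => if w < s then b w else 1).prod).sum := by
  induction L with
  | nil => simp
  | cons x L ih =>
    obtain ⟨hx, hL⟩ := List.pairwise_cons.mp hL
    have above_x : (L.map fun τ => if x < τ then a τ else 1) = L.map fun _ => 1 :=
      List.map_congr_left fun τ hτ => if_neg (hx τ hτ).not_gt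
    have below_x : (L.map fun w => if w < x then b w else 1) = L.map b :=
      List.map_congr_left fun w hw => if_pos (hx w hw)
    have tail : (L.map fun s => (if s < x then a x else 1)
          * (L.map fun τ => if s < τ then a τ else 1).prod * (a s - b s)
          * ((if x < s then b x else 1) * (L.map fun w => if w < s then b w else 1).prod)).sum
        = a x * ((L.map a).prod - (L.map b).prod) := by
      rw [ih hL, ← List.sum_map_mul_left]
      refine congrArg List.sum (List.map_congr_left fun s hs => ?_)
      rw [if_pos (hx s hs), if_neg (hx s hs).not_gt]
      ring
    simp only [List.map_cons, List.prod_cons, List.sum_cons, lt_irrefl, if_false, above_x,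
      below_x, List.map_const', List.prod_replicate, one_pow, tail]
    ring

lemma le_allOnes (s : Pat d) : s ≤ allOnes d := fun _ => le_top

section Agreement

variable {Y : Fin d → Type*}

lemma agree_symm {r : Pat d} {ℓ ℓ' : ∀ j, Y j} (h : agree r ℓ ℓ') :
    agree r ℓ' ℓ :=
  fun j hj => (h j hj).symm

lemma agree_trans {r : Pat d} {ℓ ℓ' ℓ'' : ∀ j, Y j} (h : agree r ℓ ℓ')
    (h' : agree r ℓ' ℓ'') : agree r ℓ ℓ'' :=
  fun j hj => (h j hj).trans (h' j hj)

lemma agree_of_le {s t : Pat d} (hst : s ≤ t) {ℓ ℓ' : ∀ j, Y j}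
    (h : agree t ℓ ℓ') : agree s ℓ ℓ' :=
  fun j hj => h j (Bool.eq_true_of_true_le (hj ▸ hst j))

def ObservedUnder {β : Type*} (s : Pat d) (f : (∀ j, Y j) → β) : Prop :=
  ∀ ℓ ℓ', agree s ℓ ℓ' → f ℓ = f ℓ'

namespace ObservedUnder

variable {β : Type*} {s : Pat d} {f g : (∀ j, Y j) → β}

lemma of_le {t : Pat d} (hst : s ≤ t) (hf : ObservedUnder s f) : ObservedUnder t f :=
  fun ℓ ℓ' h => hf ℓ ℓ' (agree_of_le hst h)

lemma sub [Sub β] (hf : ObservedUnder s f) (hg : ObservedUnder s g) :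
    ObservedUnder s fun ℓ => f ℓ - g ℓ :=
  fun ℓ ℓ' h => congrArg₂ (· - ·) (hf ℓ ℓ' h) (hg ℓ ℓ' h)

lemma mul [Mul β] (hf : ObservedUnder s f) (hg : ObservedUnder s g) :
    ObservedUnder s fun ℓ => f ℓ * g ℓ :=
  fun ℓ ℓ' h => congrArg₂ (· * ·) (hf ℓ ℓ' h) (hg ℓ ℓ' h)

lemma div [Div β] (hf : ObservedUnder s f) (hg : ObservedUnder s g) :
    ObservedUnder s fun ℓ => f ℓ / g ℓ :=
  fun ℓ ℓ' h => congrArg₂ (· / ·) (hf ℓ ℓ' h) (hg ℓ ℓ' h)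

lemma list_prod [Monoid β] {ι : Type*} (l : List ι) {F : ι → (∀ j, Y j) → β}
    (hF : ∀ i ∈ l, ObservedUnder s (F i)) : ObservedUnder s fun ℓ => (l.map fun i => F i ℓ).prod :=
  fun ℓ ℓ' h => congrArg List.prod (List.map_congr_left fun i hi => hF i hi ℓ ℓ' h)

end ObservedUnder

end Agreement

lemma filter_agree_eq_of_agree {r : Pat d} {ℓ ℓ' : ∀ j, X j} (h : agree r ℓ ℓ') :
    univ.filter (fun ℓ'' => agree r ℓ ℓ'') = univ.filter (fun ℓ'' => agree r ℓ' ℓ'') := by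
  ext x
  simpa using ⟨agree_trans (agree_symm h), agree_trans h⟩

lemma obsPA_observedUnder (p : (∀ j, X j) → Pat d → ℝ) (r : Pat d) (A : Finset (Pat d)) :
    ObservedUnder r fun ℓ => obsPA p r ℓ A :=
  fun ℓ ℓ' h => by simp only [obsPA, obsP, filter_agree_eq_of_agree h]

lemma odds_observedUnder (p : (∀ j, X j) → Pat d → ℝ) (PA : Pat d → Finset (Pat d))
    (r : Pat d) : ObservedUnder r (odds p PA r) :=
  fun ℓ ℓ' h => by simp only [odds, obsPA, obsP, filter_agree_eq_of_agree h]

lemma sum_sum_agree_mul {R : Type*} [CommSemiring R] (r : Pat d) (g h : (∀ j, X j) → R) :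
    ∑ ℓ, (∑ ℓ' ∈ univ.filter (fun ℓ' => agree r ℓ ℓ'), g ℓ') * h ℓ
      = ∑ ℓ, g ℓ * ∑ ℓ' ∈ univ.filter (fun ℓ' => agree r ℓ ℓ'), h ℓ' := by
  simp only [sum_mul, mul_sum, sum_filter]
  rw [sum_comm]
  refine sum_congr rfl fun ℓ _ => sum_congr rfl fun ℓ' _ => ?_
  simp only [ite_mul, zero_mul, mul_ite, mul_zero]
  exact if_congr ⟨agree_symm, agree_symm⟩ rfl rfl

lemma sum_agree_mul_jointA (p : (∀ j, X j) → Pat d → ℝ) {r : Pat d} {G : (∀ j, X j) → ℝ}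
    (hG : ObservedUnder r G) (ℓ : ∀ j, X j) (A : Finset (Pat d)) :
    ∑ ℓ' ∈ univ.filter (fun ℓ' => agree r ℓ ℓ'), G ℓ' * jointA p ℓ' A
      = G ℓ * obsPA p r ℓ A := by
  rw [sum_congr rfl fun ℓ' hℓ' => by rw [← hG ℓ ℓ' (mem_filter.mp hℓ').2], ← mul_sum]
  simp only [jointA, obsPA, obsP]
  rw [sum_comm]

/-- The tower property of conditional expectation given the part of `ℓ` observed under `r`. -/
theorem sum_condMean_mul_jointA (p : (∀ j, X j) → Pat d → ℝ) {r : Pat d} {A : Finset (Pat d)}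
    (hA : ∀ ℓ, obsPA p r ℓ A ≠ 0) (g : (∀ j, X j) → ℝ) {F : (∀ j, X j) → ℝ}
    (hF : ObservedUnder r F) :
    ∑ ℓ, (∑ ℓ' ∈ univ.filter (fun ℓ' => agree r ℓ ℓ'), g ℓ') / obsPA p r ℓ A
        * jointA p ℓ A * F ℓ
      = ∑ ℓ, g ℓ * F ℓ := by
  have hFA : ObservedUnder r fun ℓ => F ℓ / obsPA p r ℓ A :=
    hF.div (obsPA_observedUnder p r A)
  calc _ = ∑ ℓ, (∑ ℓ' ∈ univ.filter (fun ℓ' => agree r ℓ ℓ'), g ℓ')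
          * (F ℓ / obsPA p r ℓ A * jointA p ℓ A) :=
        sum_congr rfl fun ℓ _ => by ring
    _ = ∑ ℓ, g ℓ * (F ℓ / obsPA p r ℓ A * obsPA p r ℓ A) := by
        simp only [sum_sum_agree_mul, sum_agree_mul_jointA p hFA]
    _ = ∑ ℓ, g ℓ * F ℓ := by simp only [div_mul_cancel₀ _ (hA _)]

lemma obsP_le_obsP_of_le (p : (∀ j, X j) → Pat d → ℝ) {q : Pat d} (hq : ∀ ℓ, 0 ≤ p ℓ q)
    {r t : Pat d} (hrt : r ≤ t) (ℓ : ∀ j, X j) : obsP p t ℓ q ≤ obsP p r ℓ q :=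
  sum_le_sum_of_subset_of_nonneg
    (fun ℓ' hℓ' => by simpa using agree_of_le hrt (mem_filter.mp hℓ').2) fun ℓ' _ _ => hq ℓ'

lemma obsPA_parents_pos {𝓡 : Finset (Pat d)} {PA : Pat d → Finset (Pat d)}
    (hG : IsRegularGraph 𝓡 PA) {p : (∀ j, X j) → Pat d → ℝ} (hnn : ∀ ℓ, ∀ q ∈ 𝓡, 0 ≤ p ℓ q)
    (hpos : MargPos 𝓡 p) {r : Pat d} (hr : r ∈ 𝓡) (hr1 : r ≠ allOnes d) (ℓ : ∀ j, X j) :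
    0 < obsPA p r ℓ (PA r) := by
  obtain ⟨hne, hsub, hlt⟩ := hG.2 r hr hr1
  exact sum_pos (fun s hs => (hpos ℓ s (hsub hs)).trans_le
    (obsP_le_obsP_of_le p (fun ℓ' => hnn ℓ' s (hsub hs)) (hlt s hs).le ℓ)) hne

lemma IsRegularGraph.lt_of_mem_parents {𝓡 : Finset (Pat d)} {PA : Pat d → Finset (Pat d)}
    (hG : IsRegularGraph 𝓡 PA) {a b : Pat d} (hb : b ∈ 𝓡) (ha : a ∈ PA b) : b < a := by
  have hb1 : b ≠ allOnes d := by
    rintro rfl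
    simp [hG.1] at ha
  exact (hG.2 b hb hb1).2.2 a ha

lemma IsPath.pairwise_gt {𝓡 : Finset (Pat d)} {PA : Pat d → Finset (Pat d)}
    (hG : IsRegularGraph 𝓡 PA) {u v : Pat d} {Ξ : List (Pat d)} (hΞ : IsPath 𝓡 PA u v Ξ) :
    Ξ.Pairwise (· > ·) :=
  (hΞ.2.2.2.2.imp_of_mem_imp fun _ b _ hb hab =>
    hG.lt_of_mem_parents (hΞ.2.2.2.1 b hb) hab).pairwise

lemma prod_ite_allOnes_telescope {Ξ : List (Pat d)} (hΞ : Ξ.Pairwise (· > ·))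
    (a b : Pat d → ℝ) :
    (Ξ.map fun s => if s = allOnes d then 1 else a s).prod
      = (Ξ.map fun s => if s = allOnes d then 1 else b s).prod
        + (Ξ.map fun s => if s = allOnes d then 0 else
            (Ξ.map fun τ => if s < τ ∧ τ ≠ allOnes d then a τ else 1).prod * (a s - b s)
              * (Ξ.map fun w => if w < s then b w else 1).prod).sum := by
  rw [← sub_eq_iff_eq_add', prod_sub_prod_eq_sum_of_pairwise_gt _ _ hΞ]
  refine congrArg List.sum (List.map_congr_left fun s _ => ?_)
  by_cases hs : s = allOnes d
  · simp [hs]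
  · have above : ∀ τ, (if s < τ then (if τ = allOnes d then 1 else a τ) else 1)
        = if s < τ ∧ τ ≠ allOnes d then a τ else 1 := fun τ => by
      by_cases hτ : τ = allOnes d <;> simp [hτ]
    have below : ∀ w, (if w < s then (if w = allOnes d then 1 else b w) else 1)
        = if w < s then b w else 1 := fun w => by
      split_ifs with hw hw1 <;> first | rfl | exact absurd (hw1 ▸ hw) (le_allOnes s).not_gt
    simp only [if_neg hs, above, below]

theorem sum_augmentation_eq_of_correct {𝓡 : Finset (Pat d)} {PA : Pat d → Finset (Pat d)}
    (hG : IsRegularGraph 𝓡 PA) {p : (∀ j, X j) → Pat d → ℝ} (hnn : ∀ ℓ, ∀ q ∈ 𝓡, 0 ≤ p ℓ q)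
    (hpos : MargPos 𝓡 p) (hfact : SelOddsFactorizes 𝓡 PA p) {s : Pat d} (hs : s ∈ 𝓡)
    (hs1 : s ≠ allOnes d) {O μ W g : (∀ j, X j) → ℝ} (hO : ObservedUnder s O)
    (hW : ObservedUnder s W)
    (hcorrect : (∀ ℓ, O ℓ = odds p PA s ℓ) ∨
      ∀ ℓ, μ ℓ = (∑ ℓ' ∈ univ.filter (fun ℓ' => agree s ℓ ℓ'), g ℓ') / obsPA p s ℓ (PA s)) :
    ∑ ℓ, ∑ ρ ∈ 𝓡, μ ℓ * ((if ρ = s then 1 else 0) - O ℓ * (if ρ ∈ PA s then 1 else 0))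
        * W ℓ * p ℓ ρ
      = ∑ ℓ, g ℓ * ((odds p PA s ℓ - O ℓ) * W ℓ) := by
  have hsum_ρ : ∀ ℓ, ∑ ρ ∈ 𝓡, μ ℓ * ((if ρ = s then 1 else 0) - O ℓ * (if ρ ∈ PA s then 1 else 0))
      * W ℓ * p ℓ ρ = μ ℓ * jointA p ℓ (PA s) * ((odds p PA s ℓ - O ℓ) * W ℓ) := fun ℓ => by
    calc _ = μ ℓ * W ℓ * ∑ ρ ∈ 𝓡, ((if ρ = s then 1 else 0)
              - O ℓ * (if ρ ∈ PA s then 1 else 0)) * p ℓ ρ := by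
          rw [mul_sum]
          exact sum_congr rfl fun ρ _ => by ring
      _ = μ ℓ * W ℓ * (p ℓ s - O ℓ * jointA p ℓ (PA s)) := by
          rw [sum_ite_eq_sub_mul_ite_mem hs (hG.2 s hs hs1).2.1, jointA]
      _ = _ := by
          rw [hfact s hs hs1 ℓ]
          ring
  rw [sum_congr rfl fun ℓ _ => hsum_ρ ℓ]
  rcases hcorrect with hO' | hμ
  · simp [hO']
  · simp only [hμ]
    exact sum_condMean_mul_jointA p (fun ℓ => (obsPA_parents_pos hG hnn hpos hs hs1 ℓ).ne') g
      ((odds_observedUnder p PA s).sub hO |>.mul hW)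

theorem multiple_robustness_general
    (𝓡 : Finset (Pat d)) (h𝓡 : allOnes d ∈ 𝓡)
    (PA : Pat d → Finset (Pat d)) (hG : IsRegularGraph 𝓡 PA)
    (p : (∀ j, X j) → Pat d → ℝ)
    (hpmf : IsJointPMF 𝓡 p) (hpos : MargPos 𝓡 p)
    (hfact : SelOddsFactorizes 𝓡 PA p)
    (θ : (∀ j, X j) → ℝ)
    (r : Pat d)
    (Ξ : List (Pat d)) (hΞ : IsPath 𝓡 PA (allOnes d) r Ξ)
    (Od μd : Pat d → (∀ j, X j) → ℝ)
    (hOobs : ∀ s ∈ Ξ, s ≠ allOnes d → ∀ ℓ ℓ', agree s ℓ ℓ' → Od s ℓ = Od s ℓ')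
    (hrobust : ∀ s ∈ Ξ, s ≠ allOnes d →
      (∀ ℓ, Od s ℓ = odds p PA s ℓ) ∨
      (∀ ℓ, μd s ℓ =
        (∑ ℓ' ∈ univ.filter (fun ℓ' => agree s ℓ ℓ'),
            θ ℓ' * p ℓ' (allOnes d) *
              (Ξ.map fun τ => if s < τ ∧ τ ≠ allOnes d then odds p PA τ ℓ' else 1).prod)
          / obsPA p s ℓ (PA s))) :
    (∑ ℓ : ∀ j, X j, ∑ ρ ∈ 𝓡,
      (θ ℓ * (if ρ = allOnes d then (1:ℝ) else 0) *
          (Ξ.map fun s => if s = allOnes d then (1:ℝ) else Od s ℓ).prod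
        + (Ξ.map fun s => if s = allOnes d then (0:ℝ) else
            μd s ℓ * ((if ρ = s then (1:ℝ) else 0)
              - Od s ℓ * (if ρ ∈ PA s then (1:ℝ) else 0)) *
              (Ξ.map fun w => if w < s then Od w ℓ else 1).prod).sum) * p ℓ ρ)
      = ∑ ℓ : ∀ j, X j, θ ℓ * p ℓ (allOnes d) *
          (Ξ.map fun s => if s = allOnes d then (1:ℝ) else odds p PA s ℓ).prod := by
  have hW : ∀ s, ObservedUnder s fun ℓ => (Ξ.map fun w => if w < s then Od w ℓ else 1).prod :=
    fun s => ObservedUnder.list_prod Ξ fun w hw => by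
      by_cases hws : w < s
      · simpa only [if_pos hws] using
          ObservedUnder.of_le hws.le (hOobs w hw (hws.trans_le (le_allOnes s)).ne)
      · simp only [if_neg hws]
        exact fun _ _ _ => rfl
  have hmean : ∀ s ∈ Ξ, ∑ ℓ, ∑ ρ ∈ 𝓡, (if s = allOnes d then 0 else
        μd s ℓ * ((if ρ = s then 1 else 0) - Od s ℓ * (if ρ ∈ PA s then 1 else 0))
          * (Ξ.map fun w => if w < s then Od w ℓ else 1).prod) * p ℓ ρ
      = ∑ ℓ, θ ℓ * p ℓ (allOnes d) * (if s = allOnes d then 0 else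
        (Ξ.map fun τ => if s < τ ∧ τ ≠ allOnes d then odds p PA τ ℓ else 1).prod
          * (odds p PA s ℓ - Od s ℓ) * (Ξ.map fun w => if w < s then Od w ℓ else 1).prod) := by
    intro s hs
    by_cases hs1 : s = allOnes d
    · simp [hs1]
    · simp only [if_neg hs1]
      rw [sum_augmentation_eq_of_correct hG hpmf.1 hpos hfact (hΞ.2.2.2.1 s hs) hs1
        (hOobs s hs hs1) (hW s) (hrobust s hs hs1)]
      exact sum_congr rfl fun ℓ _ => by ring
  simp only [add_mul, sum_add_distrib, ← List.sum_map_mul_right, sum_list_sum_comm]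
  rw [List.map_congr_left hmean, ← sum_list_sum_comm, ← sum_add_distrib]
  refine sum_congr rfl fun ℓ _ => ?_
  rw [prod_ite_allOnes_telescope (hΞ.pairwise_gt hG) (fun s => odds p PA s ℓ) fun s => Od s ℓ,
    List.sum_map_mul_left, sum_eq_single_of_mem _ h𝓡 fun ρ _ hρ => by simp [hρ], if_pos rfl]
  ring

/-- **Theorem (multiple robustness).** Along a path `Ξ ∈ Π_r`, if for each `s ∈ Ξ`,
`s ≠ 1_d` either the working selection odds `O†_s` or the working regression function
`μ†_s` is correctly specified, then the multiply-robust functional `𝓛†_Ξ` is unbiased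
for the path-wise parameter `θ_Ξ`. -/
theorem multiple_robustness [∀ j, Nonempty (X j)]
    (𝓡 : Finset (Pat d)) (h𝓡 : allOnes d ∈ 𝓡)
    (PA : Pat d → Finset (Pat d)) (hG : IsRegularGraph 𝓡 PA)
    (p : (∀ j, X j) → Pat d → ℝ)
    (hpmf : IsJointPMF 𝓡 p) (hpos : MargPos 𝓡 p)
    (hfact : SelOddsFactorizes 𝓡 PA p)
    (θ : (∀ j, X j) → ℝ)
    (r : Pat d) (hr : r ∈ 𝓡) (hr1 : r ≠ allOnes d)
    (Ξ : List (Pat d)) (hΞ : IsPath 𝓡 PA (allOnes d) r Ξ)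
    (Od μd : Pat d → (∀ j, X j) → ℝ)
    (hOobs : ∀ s ∈ Ξ, s ≠ allOnes d → ∀ ℓ ℓ', agree s ℓ ℓ' → Od s ℓ = Od s ℓ')
    (hμobs : ∀ s ∈ Ξ, s ≠ allOnes d → ∀ ℓ ℓ', agree s ℓ ℓ' → μd s ℓ = μd s ℓ')
    (hrobust : ∀ s ∈ Ξ, s ≠ allOnes d →
      (∀ ℓ, Od s ℓ = odds p PA s ℓ) ∨
      (∀ ℓ, μd s ℓ =
        (∑ ℓ' ∈ univ.filter (fun ℓ' => agree s ℓ ℓ'),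
            θ ℓ' * p ℓ' (allOnes d) *
              (Ξ.map fun τ => if s < τ ∧ τ ≠ allOnes d then odds p PA τ ℓ' else 1).prod)
          / obsPA p s ℓ (PA s))) :
    (∑ ℓ : ∀ j, X j, ∑ ρ ∈ 𝓡,
      (θ ℓ * (if ρ = allOnes d then (1:ℝ) else 0) *
          (Ξ.map fun s => if s = allOnes d then (1:ℝ) else Od s ℓ).prod
        + (Ξ.map fun s => if s = allOnes d then (0:ℝ) else
            μd s ℓ * ((if ρ = s then (1:ℝ) else 0)
              - Od s ℓ * (if ρ ∈ PA s then (1:ℝ) else 0)) *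
              (Ξ.map fun w => if w < s then Od w ℓ else 1).prod).sum) * p ℓ ρ)
      = ∑ ℓ : ∀ j, X j, θ ℓ * p ℓ (allOnes d) *
          (Ξ.map fun s => if s = allOnes d then (1:ℝ) else odds p PA s ℓ).prod :=
  multiple_robustness_general 𝓡 h𝓡 PA hG p hpmf hpos hfact θ r Ξ hΞ Od μd hOobs hrobust
end
end

section
/- Let G be a regular pattern graph on a pattern set 𝓡 and let p be a joint pmf satisfying marginal positivity whose selection odds model factorizes with respect to G, and fix θ : ((j : Fin d) → X_j) → ℝ. Then for every r ∈ 𝓡 with r ≠ 1_d and every ℓ: Σ_{Ξ ∈ Π_r} μ_{Ξ,r}(ℓ) = m(ℓ, r), i.e. the sum over all paths from 1_d to r of the path-specific regression functions evaluated at the endpoint r equals the conditional expectation E[θ(L) | L_r = ℓ_r, R = r]. -/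
open Finset

noncomputable section

variable {d : ℕ}


variable {X : Fin d → Type*} [∀ j, Fintype (X j)] [∀ j, DecidableEq (X j)]

/-!
Removing the last vertex of a path from `1_d` to `s ≠ 1_d` identifies `Π_s` with the pairs
(`t ∈ PA(s)`, path in `Π_t`). Along this recursion the factorization `p(ℓ, s) = p(ℓ, PA(s)) O_s(ℓ)`
unrolls, by well-founded induction down the graph, to
`Σ_{Ξ ∈ Π_s} p(ℓ, 1_d) ∏_{τ ∈ Ξ, τ ≠ 1_d, τ > r} O_τ(ℓ) = p(ℓ, s)` for every `r < s`.
Applied to the parents of `r`, the numerators of the `μ_{Ξ,r}` add up to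
`Σ_{ℓ' ~_r ℓ} θ(ℓ') p(ℓ', PA(r))`. Since `O_r` is constant on `{ℓ' ~_r ℓ}`, the factorization at `r`
turns `Σ_{ℓ' ~_r ℓ} θ(ℓ') p(ℓ', r)` into that sum times `p_r(ℓ, r) / p_r(ℓ, PA(r))`.
-/

section Paths

variable {𝓡 : Finset (Pat d)} {PA : Pat d → Finset (Pat d)} {u s t : Pat d} {Ξ : List (Pat d)}

theorem IsPath.concat (h : IsPath 𝓡 PA u t Ξ) (hs : s ∈ 𝓡) (ht : t ∈ PA s) :
    IsPath 𝓡 PA u s (Ξ ++ [s]) := by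
  obtain ⟨hne, hhead, hlast, hmem, hchain⟩ := h
  refine ⟨by simp, by rwa [List.head?_append_of_ne_nil _ hne], List.getLast?_concat, ?_, ?_⟩
  · simpa [or_imp, forall_and] using And.intro hmem hs
  · exact List.IsChain.append hchain (List.isChain_singleton s) (by simp_all)

theorem IsPath.eq_singleton_or_exists_concat (h : IsPath 𝓡 PA u s Ξ) :
    Ξ = [s] ∨ ∃ t ∈ PA s, ∃ Ξ', IsPath 𝓡 PA u t Ξ' ∧ Ξ = Ξ' ++ [s] := by
  obtain ⟨hne, hhead, hlast, hmem, hchain⟩ := h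
  obtain rfl | ⟨L, b, rfl⟩ := List.eq_nil_or_concat' Ξ
  · exact absurd rfl hne
  obtain rfl : b = s := by simpa using hlast
  obtain rfl | ⟨L', t, rfl⟩ := List.eq_nil_or_concat' L
  · exact .inl rfl
  replace hchain := List.isChain_append.1 hchain
  refine .inr ⟨t, by simpa using hchain.2.2, L' ++ [t], ⟨by simp, ?_, by simp, ?_, hchain.1⟩, rfl⟩
  · rwa [List.head?_append_of_ne_nil _ (by simp)] at hhead
  · exact fun q hq => hmem q (List.mem_append_left _ hq)

theorem isPath_self_iff (hu : u ∈ 𝓡) (hPA : PA u = ∅) : IsPath 𝓡 PA u u Ξ ↔ Ξ = [u] := by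
  refine ⟨fun h => ?_, ?_⟩
  · obtain h | ⟨t, ht, -⟩ := h.eq_singleton_or_exists_concat
    · exact h
    · simp [hPA] at ht
  · rintro rfl
    exact ⟨by simp, rfl, rfl, by simpa using hu, List.isChain_singleton u⟩

theorem sum_paths_eq_sum_parents {M : Type*} [AddCommMonoid M]
    (Paths : Pat d → Finset (List (Pat d)))
    (hPaths : ∀ r Ξ, Ξ ∈ Paths r ↔ IsPath 𝓡 PA u r Ξ) (hs : s ∈ 𝓡) (hsu : s ≠ u)
    (f : List (Pat d) → M) :
    ∑ Ξ ∈ Paths s, f Ξ = ∑ t ∈ PA s, ∑ Ξ' ∈ Paths t, f (Ξ' ++ [s]) := by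
  rw [sum_sigma']
  symm
  refine sum_bij (fun x _ => x.2 ++ [s]) ?_ ?_ ?_ fun _ _ => rfl
  · rintro ⟨t, Ξ'⟩ hx
    rw [mem_sigma, hPaths] at hx
    exact (hPaths s _).2 (hx.2.concat hs hx.1)
  · rintro ⟨t, Ξ'⟩ hx ⟨t', Ξ''⟩ hx' heq
    rw [mem_sigma, hPaths] at hx hx'
    obtain rfl := List.append_cancel_right heq
    obtain rfl : t = t' := Option.some.inj (hx.2.2.2.1.symm.trans hx'.2.2.2.1)
    rfl
  · intro Ξ hΞ
    obtain hsingle | ⟨t, ht, Ξ', hpath, rfl⟩ := ((hPaths s Ξ).1 hΞ).eq_singleton_or_exists_concat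
    · exact absurd (by simpa [hsingle] using ((hPaths s Ξ).1 hΞ).2.1) hsu
    · exact ⟨⟨t, Ξ'⟩, mem_sigma.2 ⟨ht, (hPaths t Ξ').2 hpath⟩, rfl⟩

end Paths

def pathOdds (p : (∀ j, X j) → Pat d → ℝ) (PA : Pat d → Finset (Pat d)) (r : Pat d)
    (Ξ : List (Pat d)) (ℓ : ∀ j, X j) : ℝ :=
  (Ξ.map fun τ => if r < τ ∧ τ ≠ allOnes d then odds p PA τ ℓ else 1).prod

section PathOdds

variable {𝓡 : Finset (Pat d)} {PA : Pat d → Finset (Pat d)} {p : (∀ j, X j) → Pat d → ℝ}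

theorem pathOdds_concat (r s : Pat d) (Ξ : List (Pat d)) (ℓ : ∀ j, X j) :
    pathOdds p PA r (Ξ ++ [s]) ℓ =
      pathOdds p PA r Ξ ℓ * if r < s ∧ s ≠ allOnes d then odds p PA s ℓ else 1 := by
  simp [pathOdds]

variable {Paths : Pat d → Finset (List (Pat d))}

theorem sum_paths_mul_pathOdds_of_lt (h𝓡 : allOnes d ∈ 𝓡) (hG : IsRegularGraph 𝓡 PA)
    (hfact : SelOddsFactorizes 𝓡 PA p) (hPaths : ∀ r Ξ, Ξ ∈ Paths r ↔ IsPath 𝓡 PA (allOnes d) r Ξ)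
    {r s : Pat d} (hs : s ∈ 𝓡) (hrs : r < s) (ℓ : ∀ j, X j) :
    ∑ Ξ ∈ Paths s, p ℓ (allOnes d) * pathOdds p PA r Ξ ℓ = p ℓ s := by
  induction s using WellFoundedGT.induction with
  | _ s ih =>
    by_cases hs1 : s = allOnes d
    · subst hs1
      have hPaths_top : Paths (allOnes d) = {[allOnes d]} :=
        ext fun Ξ => (hPaths _ Ξ).trans ((isPath_self_iff h𝓡 hG.1).trans mem_singleton.symm)
      simp [hPaths_top, pathOdds]
    obtain ⟨-, hsub, hlt⟩ := hG.2 s hs hs1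
    calc ∑ Ξ ∈ Paths s, p ℓ (allOnes d) * pathOdds p PA r Ξ ℓ
        = ∑ t ∈ PA s, ∑ Ξ' ∈ Paths t, p ℓ (allOnes d) * pathOdds p PA r (Ξ' ++ [s]) ℓ :=
          sum_paths_eq_sum_parents Paths hPaths hs hs1 _
      _ = ∑ t ∈ PA s, p ℓ t * odds p PA s ℓ := sum_congr rfl fun t ht => by
          simp_rw [pathOdds_concat, if_pos (And.intro hrs hs1), ← mul_assoc, ← sum_mul,
            ih t (hlt t ht) (hsub ht) (hrs.trans (hlt t ht))]
      _ = p ℓ s := by rw [← sum_mul, hfact s hs hs1 ℓ, jointA]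

theorem sum_paths_mul_pathOdds_self (h𝓡 : allOnes d ∈ 𝓡) (hG : IsRegularGraph 𝓡 PA)
    (hfact : SelOddsFactorizes 𝓡 PA p) (hPaths : ∀ r Ξ, Ξ ∈ Paths r ↔ IsPath 𝓡 PA (allOnes d) r Ξ)
    {r : Pat d} (hr : r ∈ 𝓡) (hr1 : r ≠ allOnes d) (ℓ : ∀ j, X j) :
    ∑ Ξ ∈ Paths r, p ℓ (allOnes d) * pathOdds p PA r Ξ ℓ = jointA p ℓ (PA r) := by
  obtain ⟨-, hsub, hlt⟩ := hG.2 r hr hr1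
  rw [sum_paths_eq_sum_parents Paths hPaths hr hr1, jointA]
  refine sum_congr rfl fun t ht => ?_
  simp_rw [pathOdds_concat, lt_irrefl, false_and, if_false, mul_one]
  exact sum_paths_mul_pathOdds_of_lt h𝓡 hG hfact hPaths (hsub ht) (hlt t ht) ℓ

end PathOdds

section Agree

variable {p : (∀ j, X j) → Pat d → ℝ} {r : Pat d} {ℓ ℓ' : ∀ j, X j}

theorem obsP_eq_of_agree (h : agree r ℓ ℓ') (s : Pat d) : obsP p r ℓ' s = obsP p r ℓ s := by
  unfold obsP
  congr 1
  ext x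
  simp only [mem_filter, mem_univ, true_and]
  exact ⟨fun hx j hj => (h j hj).trans (hx j hj), fun hx j hj => (h j hj).symm.trans (hx j hj)⟩

theorem odds_eq_of_agree (PA : Pat d → Finset (Pat d)) (h : agree r ℓ ℓ') :
    odds p PA r ℓ' = odds p PA r ℓ := by
  simp only [odds, obsPA, obsP_eq_of_agree h]

end Agree

theorem sum_path_regression_eq_cond_exp_general
    (𝓡 : Finset (Pat d)) (h𝓡 : allOnes d ∈ 𝓡)
    (PA : Pat d → Finset (Pat d)) (hG : IsRegularGraph 𝓡 PA)
    (p : (∀ j, X j) → Pat d → ℝ)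
    (hpos : MargPos 𝓡 p)
    (hfact : SelOddsFactorizes 𝓡 PA p)
    (θ : (∀ j, X j) → ℝ)
    (Paths : Pat d → Finset (List (Pat d)))
    (hPaths : ∀ r, ∀ Ξ, Ξ ∈ Paths r ↔ IsPath 𝓡 PA (allOnes d) r Ξ) :
    ∀ r ∈ 𝓡, r ≠ allOnes d → ∀ ℓ,
      (∑ Ξ ∈ Paths r,
        (∑ ℓ' ∈ univ.filter (fun ℓ' => agree r ℓ ℓ'),
            θ ℓ' * p ℓ' (allOnes d) *
              (Ξ.map fun τ => if r < τ ∧ τ ≠ allOnes d then odds p PA τ ℓ' else 1).prod)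
          / obsPA p r ℓ (PA r))
      = (∑ ℓ' ∈ univ.filter (fun ℓ' => agree r ℓ ℓ'), θ ℓ' * p ℓ' r) / obsP p r ℓ r := by
  intro r hr hr1 ℓ
  have hpaths (ℓ' : ∀ j, X j) :
      ∑ Ξ ∈ Paths r, θ ℓ' * p ℓ' (allOnes d) * pathOdds p PA r Ξ ℓ' =
        θ ℓ' * jointA p ℓ' (PA r) := by
    rw [← sum_paths_mul_pathOdds_self h𝓡 hG hfact hPaths hr hr1, mul_sum]
    simp_rw [mul_assoc]
  have hfact_r : ∀ ℓ' ∈ univ.filter (fun ℓ' => agree r ℓ ℓ'),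
      θ ℓ' * p ℓ' r = θ ℓ' * jointA p ℓ' (PA r) * odds p PA r ℓ := fun ℓ' hℓ' => by
    rw [hfact r hr hr1, odds_eq_of_agree PA (mem_filter.1 hℓ').2, mul_assoc]
  calc _ = (∑ ℓ' ∈ univ.filter (fun ℓ' => agree r ℓ ℓ'), θ ℓ' * jointA p ℓ' (PA r))
        / obsPA p r ℓ (PA r) := by
        rw [← sum_div, sum_comm]
        exact congrArg (· / _) (sum_congr rfl fun ℓ' _ => hpaths ℓ')
    _ = _ := by
        rw [sum_congr rfl hfact_r, ← sum_mul, odds, mul_div_assoc', div_right_comm,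
          mul_div_cancel_right₀ _ (hpos ℓ r hr).ne']

/-- **Proposition (relation to regression adjustment).** The sum over all paths
`Ξ ∈ Π_r` of the path-specific regression functions `μ_{Ξ,r}` equals the conditional
expectation `m(ℓ, r) = E[θ(L) | L_r = ℓ_r, R = r]`. -/
theorem sum_path_regression_eq_cond_exp [∀ j, Nonempty (X j)]
    (𝓡 : Finset (Pat d)) (h𝓡 : allOnes d ∈ 𝓡)
    (PA : Pat d → Finset (Pat d)) (hG : IsRegularGraph 𝓡 PA)
    (p : (∀ j, X j) → Pat d → ℝ)
    (hpmf : IsJointPMF 𝓡 p) (hpos : MargPos 𝓡 p)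
    (hfact : SelOddsFactorizes 𝓡 PA p)
    (θ : (∀ j, X j) → ℝ)
    (Paths : Pat d → Finset (List (Pat d)))
    (hPaths : ∀ r, ∀ Ξ, Ξ ∈ Paths r ↔ IsPath 𝓡 PA (allOnes d) r Ξ) :
    ∀ r ∈ 𝓡, r ≠ allOnes d → ∀ ℓ,
      (∑ Ξ ∈ Paths r,
        (∑ ℓ' ∈ univ.filter (fun ℓ' => agree r ℓ ℓ'),
            θ ℓ' * p ℓ' (allOnes d) *
              (Ξ.map fun τ => if r < τ ∧ τ ≠ allOnes d then odds p PA τ ℓ' else 1).prod)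
          / obsPA p r ℓ (PA r))
      = (∑ ℓ' ∈ univ.filter (fun ℓ' => agree r ℓ ℓ'), θ ℓ' * p ℓ' r) / obsP p r ℓ r :=
  sum_path_regression_eq_cond_exp_general 𝓡 h𝓡 PA hG p hpos hfact θ Paths hPaths
end
end
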